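/- Let G be a minimum counterexample to the statement 'every odd-hole-free graph H with Δ(H) ≥ 7 satisfies χ(H) ≤ max{Δ(H) − 1, ω(H)}', let u be a vertex of G with degree Δ(G), and let c be a proper coloring of G − u with Δ(G) − 1 colors. Then for every vertex v ∈ N(u), at most one pair of vertices of N_{G−u}(v) receives the same color under c; equivalently, the number of distinct colors assigned by c to N_{G−u}(v) is at least |N_{G−u}(v)| − 1. -/

import Mathlib

/-! Suppose some `v ∈ N(u)` had two colour repetitions in `N_{G-u}(v)`; then a colour `β ≠ c v`
is missing around `v`. As `G` is not `(Δ - 1)`-colourable, every proper `(Δ - 1)`-colouring of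
`G - u` uses all colours on the `Δ` vertices of `N(u)`. Recolouring `v` with `β` shows that `c v`
reappears at a second neighbour `w` of `u`, so `c` is injective on `N(u) \ {v}`.
If two neighbours of `u` are alone in their colours on `N(u)`, swapping the two colours on a Kempe
chain shows that they are joined by a two-coloured path; a shortest one is induced and has odd
length, so together with `u` it is an odd hole unless the two vertices are adjacent. Hence `u` and
`N(u) \ {v}` form a clique of size `Δ`, while `c` with a fresh colour on `u` gives
`χ(G) ≤ Δ ≤ ω(G)`. -/

/-- `G` has an *odd hole*: an induced cycle of odd length at least 5
(a hole is an induced cycle of length at least 4, so odd holes have length at least 5). -/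
def SimpleGraph.HasOddHole {V : Type*} (G : SimpleGraph V) : Prop :=
  ∃ n : ℕ, Odd n ∧ 5 ≤ n ∧ Nonempty (SimpleGraph.cycleGraph n ↪g G)

open Finset Function

theorem Finset.exists_ne_notMem_of_card_add_one_lt {α : Type*} [Fintype α] [DecidableEq α]
    {t : Finset α} (a : α) (h : #t + 1 < Fintype.card α) : ∃ β, β ≠ a ∧ β ∉ t := by
  obtain ⟨β, -, hβ⟩ := exists_mem_notMem_of_card_lt_card (s := insert a t) (t := univ)
    (by rw [card_univ]; exact (card_insert_le a t).trans_lt h)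
  exact ⟨β, not_or.mp (mem_insert.not.mp hβ)⟩

namespace SimpleGraph

variable {V α : Type*} {G : SimpleGraph V}

theorem cycleGraph_adj_iff_val {n : ℕ} {i j : Fin (n + 2)} :
    (cycleGraph (n + 2)).Adj i j ↔ i.val + 1 = j.val ∨ j.val + 1 = i.val ∨
      (i.val = 0 ∧ j.val = n + 1) ∨ (j.val = 0 ∧ i.val = n + 1) := by
  have hi := i.isLt
  have hj := j.isLt
  rw [cycleGraph_adj']
  rcases lt_trichotomy i j with h | rfl | h
  · rw [Fin.coe_sub_iff_lt.mpr h, Fin.coe_sub_iff_le.mpr h.le]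
    omega
  · simp only [sub_self, Fin.val_zero]
    omega
  · rw [Fin.coe_sub_iff_le.mpr h.le, Fin.coe_sub_iff_lt.mpr h]
    omega

theorem Reachable.eq_or_exists_adj {a x : V} (h : G.Reachable a x) : a = x ∨ ∃ y, G.Adj x y := by
  obtain ⟨w⟩ := h
  match w.reverse with
  | .nil => exact Or.inl rfl
  | .cons h _ => exact Or.inr ⟨_, h⟩

theorem Walk.not_adj_getVert_of_length_eq_dist {a b : V} (w : G.Walk a b)
    (hw : w.length = G.dist a b) {i j : ℕ} (hij : i + 1 < j) (hj : j ≤ w.length) :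
    ¬ G.Adj (w.getVert i) (w.getVert j) := fun h => by
  have := dist_le ((w.take i).append (.cons h (w.drop j)))
  rw [Walk.length_append, Walk.length_cons, Walk.take_length, Walk.drop_length] at this
  omega

theorem Walk.adj_getVert_iff_of_length_eq_dist {a b : V} (w : G.Walk a b)
    (hw : w.length = G.dist a b) {i j : ℕ} (hi : i ≤ w.length) (hj : j ≤ w.length) :
    G.Adj (w.getVert i) (w.getVert j) ↔ i + 1 = j ∨ j + 1 = i := by
  refine ⟨fun h => ?_, ?_⟩
  · by_contra! hne
    rcases lt_trichotomy i j with hij | rfl | hij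
    · exact w.not_adj_getVert_of_length_eq_dist hw (by omega) hj h
    · exact h.ne rfl
    · exact w.not_adj_getVert_of_length_eq_dist hw (by omega) hi h.symm
  · rintro (rfl | rfl)
    · exact w.adj_getVert_succ (by omega)
    · exact (w.adj_getVert_succ (by omega)).symm

theorem nonempty_cycleGraph_embedding_of_path {p : ℕ → V} {u : V} {L : ℕ}
    (hinj : ∀ i ≤ L, ∀ j ≤ L, p i = p j → i = j) (hu : ∀ i ≤ L, p i ≠ u)
    (hp : ∀ i ≤ L, ∀ j ≤ L, G.Adj (p i) (p j) ↔ i + 1 = j ∨ j + 1 = i)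
    (hup : ∀ i ≤ L, G.Adj (p i) u ↔ i = 0 ∨ i = L) :
    Nonempty (cycleGraph (L + 2) ↪g G) := by
  let f : Fin (L + 2) → V := fun i => if (i : ℕ) ≤ L then p i else u
  have f_inj : Injective f := by
    intro i j hij
    have := i.isLt
    have := j.isLt
    by_cases hi : (i : ℕ) ≤ L <;> by_cases hj : (j : ℕ) ≤ L <;>
      simp only [f, hi, hj, if_true, if_false] at hij
    · exact Fin.ext (hinj _ hi _ hj hij)
    · exact absurd hij (hu _ hi)
    · exact absurd hij.symm (hu _ hj)
    · exact Fin.ext (by omega)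
  refine ⟨⟨⟨f, f_inj⟩, fun {i j} => ?_⟩⟩
  have := i.isLt
  have := j.isLt
  rw [cycleGraph_adj_iff_val]
  by_cases hi : (i : ℕ) ≤ L <;> by_cases hj : (j : ℕ) ≤ L <;>
    simp only [Embedding.coeFn_mk, f, hi, hj, if_true, if_false]
  · rw [hp _ hi _ hj]
    omega
  · rw [hup _ hi]
    omega
  · rw [G.adj_comm, hup _ hj]
    omega
  · simp only [SimpleGraph.irrefl, false_iff]
    omega

def IsColoringOff (G : SimpleGraph V) (u : V) (d : V → α) : Prop :=
  ∀ x y, x ≠ u → y ≠ u → G.Adj x y → d x ≠ d y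

/-- The subgraph of `G - u` induced by the vertices of colours `γ` and `δ`: its components are
the Kempe chains of `d`. -/
def kempeGraph (G : SimpleGraph V) (u : V) (d : V → α) (γ δ : α) : SimpleGraph V where
  Adj x y := G.Adj x y ∧ x ≠ u ∧ y ≠ u ∧ (d x = γ ∨ d x = δ) ∧ (d y = γ ∨ d y = δ)
  symm := ⟨fun _ _ ⟨h, hx, hy, hdx, hdy⟩ => ⟨h.symm, hy, hx, hdy, hdx⟩⟩
  loopless := ⟨fun x h => G.loopless.irrefl x h.1⟩

open Classical in
noncomputable def kempeSwap [DecidableEq α] (G : SimpleGraph V) (u : V) (d : V → α)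
    (γ δ : α) (a : V) : V → α :=
  fun x => if (G.kempeGraph u d γ δ).Reachable a x then Equiv.swap γ δ (d x) else d x

variable {u : V} {d : V → α} {γ δ : α}

@[simp]
theorem kempeGraph_adj {x y : V} : (G.kempeGraph u d γ δ).Adj x y ↔
    G.Adj x y ∧ x ≠ u ∧ y ≠ u ∧ (d x = γ ∨ d x = δ) ∧ (d y = γ ∨ d y = δ) :=
  Iff.rfl

theorem eq_of_injOn_neighborSet_diff {v : V} (hinj : Set.InjOn d (G.neighborSet u \ {v}))
    {x z : V} (hx : G.Adj u x) (hz : G.Adj u z) (hxv : d x ≠ d v) (hzx : d z = d x) : z = x :=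
  hinj ⟨hz, by rintro rfl; exact hxv hzx.symm⟩ ⟨hx, by rintro rfl; exact hxv rfl⟩ hzx

namespace IsColoringOff

theorem nonempty_coloring [DecidableEq V] (hd : G.IsColoringOff u d) {β : α}
    (hβ : ∀ x, G.Adj u x → d x ≠ β) : Nonempty (G.Coloring α) := by
  refine ⟨Coloring.mk (update d u β) fun {x y} hxy => ?_⟩
  rcases eq_or_ne x u with rfl | hx
  · rw [update_self, update_of_ne hxy.ne']
    exact (hβ y hxy).symm
  rcases eq_or_ne y u with rfl | hy
  · rw [update_self, update_of_ne hx]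
    exact hβ x hxy.symm
  rw [update_of_ne hx, update_of_ne hy]
  exact hd x y hx hy hxy

theorem exists_adj_eq [DecidableEq V] (hd : G.IsColoringOff u d)
    (hG : IsEmpty (G.Coloring α)) (β : α) : ∃ x, G.Adj u x ∧ d x = β := by
  by_contra! h
  exact hG.false (hd.nonempty_coloring h).some

theorem update [DecidableEq V] (hd : G.IsColoringOff u d) {v : V} {β : α}
    (hβ : ∀ x, x ≠ u → G.Adj v x → d x ≠ β) : G.IsColoringOff u (Function.update d v β) := by
  intro x y hx hy hxy
  rcases eq_or_ne x v with rfl | hxv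
  · rw [update_self, update_of_ne hxy.ne']
    exact (hβ y hy hxy).symm
  rcases eq_or_ne y v with rfl | hyv
  · rw [update_self, update_of_ne hxv]
    exact hβ x hx hxy.symm
  rw [update_of_ne hxv, update_of_ne hyv]
  exact hd x y hx hy hxy

theorem comp {β : Type*} (hd : G.IsColoringOff u d) {f : α → β} (hf : Injective f) :
    G.IsColoringOff u (f ∘ d) :=
  fun x y hx hy hxy => hf.ne (hd x y hx hy hxy)

theorem colorable_succ [DecidableEq V] {n : ℕ} {d : V → Fin n} (hd : G.IsColoringOff u d) :
    G.Colorable (n + 1) :=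
  (hd.comp (Fin.castSucc_injective n)).nonempty_coloring fun x _ => Fin.castSucc_ne_last (d x)

variable [DecidableEq α]

theorem eq_swap_of_kempeGraph_adj (hd : G.IsColoringOff u d) {x y : V}
    (h : (G.kempeGraph u d γ δ).Adj x y) : d y = Equiv.swap γ δ (d x) := by
  obtain ⟨hxy, hx, hy, hdx, hdy⟩ := h
  have hne := hd x y hx hy hxy
  rcases hdx with hdx | hdx <;> rcases hdy with hdy | hdy <;>
    simp_all [Equiv.swap_apply_left, Equiv.swap_apply_right]

theorem eq_iterate_swap_of_walk (hd : G.IsColoringOff u d) {x y : V}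
    (w : (G.kempeGraph u d γ δ).Walk x y) : d y = (Equiv.swap γ δ)^[w.length] (d x) := by
  induction w with
  | nil => rfl
  | cons h _ ih => rw [Walk.length_cons, iterate_succ_apply, ← hd.eq_swap_of_kempeGraph_adj h, ih]

theorem kempeSwap (hd : G.IsColoringOff u d) (a : V) :
    G.IsColoringOff u (G.kempeSwap u d γ δ a) := by
  set K := G.kempeGraph u d γ δ
  have hmixed : ∀ x y, x ≠ u → y ≠ u → G.Adj x y → K.Reachable a x → ¬ K.Reachable a y →
      Equiv.swap γ δ (d x) ≠ d y := by
    intro x y hx hy hxy hax hay h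
    rw [Equiv.swap_apply_eq_iff] at h
    by_cases hdy : d y = γ ∨ d y = δ
    · refine hay (hax.trans (Adj.reachable ⟨hxy, hx, hy, ?_, hdy⟩))
      rcases hdy with hdy | hdy <;> simp [h, hdy]
    · rw [not_or] at hdy
      rw [Equiv.swap_apply_of_ne_of_ne hdy.1 hdy.2] at h
      exact hd x y hx hy hxy h
  intro x y hx hy hxy
  by_cases hax : K.Reachable a x <;> by_cases hay : K.Reachable a y <;>
    simp only [SimpleGraph.kempeSwap, K, hax, hay, if_true, if_false]
  · exact (Equiv.injective _).ne (hd x y hx hy hxy)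
  · exact hmixed x y hx hy hxy hax hay
  · exact (hmixed y x hy hx hxy.symm hay hax).symm
  · exact hd x y hx hy hxy

theorem kempeGraph_reachable [DecidableEq V] (hd : G.IsColoringOff u d)
    (hG : IsEmpty (G.Coloring α)) {a b : V} (hγ : ∀ x, G.Adj u x → d x = γ → x = a)
    (hδ : ∀ x, G.Adj u x → d x = δ → (G.kempeGraph u d γ δ).Reachable a x → x = b) :
    (G.kempeGraph u d γ δ).Reachable a b := by
  obtain ⟨x, hux, hx⟩ := (hd.kempeSwap a).exists_adj_eq hG γ
  by_cases hax : (G.kempeGraph u d γ δ).Reachable a x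
  · rw [SimpleGraph.kempeSwap, if_pos hax, Equiv.swap_apply_eq_iff, Equiv.swap_apply_left] at hx
    exact hδ x hux hx hax ▸ hax
  · rw [SimpleGraph.kempeSwap, if_neg hax] at hx
    obtain rfl := hγ x hux hx
    exact absurd (Reachable.refl x) hax

theorem adj_of_kempeGraph [DecidableEq V] (hd : G.IsColoringOff u d) (hfree : ¬ G.HasOddHole)
    (hG : IsEmpty (G.Coloring α)) (hγδ : γ ≠ δ) {a b : V} (ha : G.Adj u a) (hb : G.Adj u b)
    (hda : d a = γ) (hdb : d b = δ) (hγ : ∀ x, G.Adj u x → d x = γ → x = a)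
    (hδ : ∀ x, G.Adj u x → d x = δ → (G.kempeGraph u d γ δ).Reachable a x → x = b) :
    G.Adj a b := by
  set K := G.kempeGraph u d γ δ
  by_contra hab
  obtain ⟨w, hw⟩ := (hd.kempeGraph_reachable hG hγ hδ).exists_walk_length_eq_dist
  have hL : Odd w.length := by
    refine Nat.not_even_iff_odd.mp fun hL => hγδ ?_
    have := hd.eq_iterate_swap_of_walk w
    rwa [Involutive.iterate_even (Equiv.swap_apply_self γ δ) hL, id, hdb, hda, eq_comm] at this
  have hL1 : w.length ≠ 1 := fun h => hab (by
    simpa [w.getVert_of_length_le h.le] using (w.adj_getVert_succ (i := 0) (by omega)).1)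
  have hmem : ∀ i, K.Reachable a (w.getVert i) ∧ w.getVert i ≠ u ∧
      (d (w.getVert i) = γ ∨ d (w.getVert i) = δ) := by
    intro i
    refine ⟨⟨w.take i⟩, ?_⟩
    rcases Reachable.eq_or_exists_adj ⟨w.take i⟩ with h | ⟨y, hy⟩
    · rw [← h]
      exact ⟨ha.ne', Or.inl hda⟩
    · exact ⟨hy.2.1, hy.2.2.2.1⟩
  have hinj := (w.isPath_of_length_eq_dist hw).getVert_injOn
  obtain ⟨φ⟩ := nonempty_cycleGraph_embedding_of_path (G := G) (p := w.getVert) (u := u)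
    (fun i hi j hj h => hinj hi hj h) (fun i hi => (hmem i).2.1)
    (fun i hi j hj => by
      rw [← w.adj_getVert_iff_of_length_eq_dist hw hi hj, kempeGraph_adj]
      simp [(hmem i).2, (hmem j).2])
    (fun i hi => by
      refine ⟨fun h => ?_, ?_⟩
      · rcases (hmem i).2.2 with hc | hc
        · exact Or.inl (hinj hi (Nat.zero_le _) (by simpa using hγ _ h.symm hc))
        · exact Or.inr (hinj hi (le_refl w.length) (by simpa using hδ _ h.symm hc (hmem i).1))
      · rintro (rfl | rfl)
        · simpa using ha.symm
        · simpa using hb.symm)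
  obtain ⟨k, hk⟩ := hL
  exact hfree ⟨w.length + 2, by rw [hk]; exact ⟨k + 1, by ring⟩, by omega, ⟨φ⟩⟩

theorem adj_of_unique [DecidableEq V] (hd : G.IsColoringOff u d) (hfree : ¬ G.HasOddHole)
    (hG : IsEmpty (G.Coloring α)) {a b : V} (ha : G.Adj u a) (hb : G.Adj u b) (hab : d a ≠ d b)
    (hua : ∀ x, G.Adj u x → d x = d a → x = a) (hub : ∀ x, G.Adj u x → d x = d b → x = b) :
    G.Adj a b :=
  hd.adj_of_kempeGraph hfree hG hab ha hb rfl rfl hua fun x hx h _ => hub x hx h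

theorem adj_of_eq_of_injOn [DecidableEq V] (hd : G.IsColoringOff u d) (hfree : ¬ G.HasOddHole)
    (hG : IsEmpty (G.Coloring α)) {v w : V} (hinj : Set.InjOn d (G.neighborSet u \ {v}))
    (hw : G.Adj u w) (hwv : w ≠ v) (hdw : d w = d v) {β : α}
    (hβ : ∀ x, x ≠ u → G.Adj v x → d x ≠ β) (hβv : β ≠ d v) {y : V} (hy : G.Adj u y)
    (hyv : y ≠ v) (hyw : y ≠ w) : G.Adj w y := by
  have hdy : d y ≠ d v := fun h => hyw (hinj ⟨hy, hyv⟩ ⟨hw, hwv⟩ (h.trans hdw.symm))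
  by_cases hyβ : d y = β
  · -- `v` is isolated in the Kempe graph of the colours `β`, `d v`, as `β` is missing around `v`
    refine (hd.adj_of_kempeGraph hfree hG (hyβ ▸ hβv) hy hw hyβ hdw (fun x hx hxβ =>
      eq_of_injOn_neighborSet_diff hinj hy hx hdy (hxβ.trans hyβ.symm)) fun x hx hxv hyx => ?_).symm
    rcases eq_or_ne x v with rfl | hxv'
    · rcases hyx.eq_or_exists_adj with rfl | ⟨z, hxz, hxu, hzu, -, hdz | hdz⟩
      · exact absurd rfl hyv
      · exact absurd hdz (hβ z hzu hxz)
      · exact absurd hdz.symm (hd x z hxu hzu hxz)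
    · exact hinj ⟨hx, hxv'⟩ ⟨hw, hwv⟩ (hxv.trans hdw.symm)
  · -- after recolouring `v` with `β`, both `y` and `w` are alone in their colours around `u`
    have hv' : Function.update d v β v = β := update_self ..
    have hy' : Function.update d v β y = d y := update_of_ne hyv ..
    have hw' : Function.update d v β w = d v := (update_of_ne hwv ..).trans hdw
    refine ((hd.update hβ).adj_of_unique hfree hG hy hw (by rwa [hy', hw'])
      (fun x hx hxy => ?_) fun x hx hxw => ?_).symm
    · rcases eq_or_ne x v with rfl | hxv
      · exact absurd (hv'.symm.trans (hxy.trans hy')) (Ne.symm hyβ)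
      · rw [update_of_ne hxv, hy'] at hxy
        exact eq_of_injOn_neighborSet_diff hinj hy hx hdy hxy
    · rcases eq_or_ne x v with rfl | hxv
      · exact absurd (hv'.symm.trans (hxw.trans hw')) hβv
      · rw [update_of_ne hxv, hw'] at hxw
        exact hinj ⟨hx, hxv⟩ ⟨hw, hwv⟩ (hxw.trans hdw.symm)

variable [Fintype α] [Fintype V] [DecidableRel G.Adj] [DecidableEq V]

theorem injOn_neighborSet_diff (hd : G.IsColoringOff u d) (hG : IsEmpty (G.Coloring α))
    (hN : #(G.neighborFinset u) = Fintype.card α + 1) {v w : V} (hv : G.Adj u v)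
    (hw : G.Adj u w) (hwv : w ≠ v) (hdw : d w = d v) : Set.InjOn d (G.neighborSet u \ {v}) := by
  have himage : ((G.neighborFinset u).erase v).image d = univ := eq_univ_of_forall fun β => by
    obtain ⟨x, hx, rfl⟩ := hd.exists_adj_eq hG β
    rcases eq_or_ne x v with rfl | hxv
    · exact mem_image.mpr ⟨w, by simp [hw, hwv], hdw⟩
    · exact mem_image.mpr ⟨x, by simp [hx, hxv], rfl⟩
  have hcard : #(((G.neighborFinset u).erase v).image d) = #((G.neighborFinset u).erase v) := by
    rw [himage, card_univ, card_erase_of_mem (by simpa using hv), hN, Nat.add_sub_cancel]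
  simpa using injOn_of_card_image_eq hcard

theorem isClique_insert_neighborFinset_erase (hd : G.IsColoringOff u d)
    (hfree : ¬ G.HasOddHole) (hG : IsEmpty (G.Coloring α))
    (hN : #(G.neighborFinset u) = Fintype.card α + 1) {v : V} (hv : G.Adj u v) {β : α}
    (hβ : ∀ x, x ≠ u → G.Adj v x → d x ≠ β) (hβv : β ≠ d v) :
    G.IsClique (insert u ((G.neighborFinset u).erase v) : Finset V) := by
  obtain ⟨w, hw, hdw⟩ := (hd.update hβ).exists_adj_eq hG (d v)
  have hwv : w ≠ v := by
    rintro rfl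
    exact hβv (by simpa using hdw)
  rw [update_of_ne hwv] at hdw
  have hinj := hd.injOn_neighborSet_diff hG hN hv hw hwv hdw
  rw [coe_insert, coe_erase, coe_neighborFinset]
  refine isClique_insert.mpr ⟨fun x ⟨hx, hxv⟩ y ⟨hy, hyv⟩ hxy => ?_, fun x hx _ => hx.1⟩
  rcases eq_or_ne x w with rfl | hxw
  · exact hd.adj_of_eq_of_injOn hfree hG hinj hw hwv hdw hβ hβv hy hyv hxy.symm
  rcases eq_or_ne y w with rfl | hyw
  · exact (hd.adj_of_eq_of_injOn hfree hG hinj hw hwv hdw hβ hβv hx hxv hxy).symm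
  have hdx : d x ≠ d v := fun h => hxw (hinj ⟨hx, hxv⟩ ⟨hw, hwv⟩ (h.trans hdw.symm))
  have hdy : d y ≠ d v := fun h => hyw (hinj ⟨hy, hyv⟩ ⟨hw, hwv⟩ (h.trans hdw.symm))
  exact hd.adj_of_unique hfree hG hx hy (fun h => hxy (hinj ⟨hx, hxv⟩ ⟨hy, hyv⟩ h))
    (fun z hz => eq_of_injOn_neighborSet_diff hinj hx hz hdx)
    (fun z hz => eq_of_injOn_neighborSet_diff hinj hy hz hdy)

end IsColoringOff

end SimpleGraph

open SimpleGraph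

theorem statement_10_general {V : Type} [Fintype V] [DecidableEq V]
    (G : SimpleGraph V) [DecidableRel G.Adj]
    (hfree : ¬ G.HasOddHole)
    (hcex : (max (G.maxDegree - 1) G.cliqueNum : ℕ) < G.chromaticNumber)
    (u : V) (hu : G.degree u = G.maxDegree)
    (c : V → Fin (G.maxDegree - 1))
    (hc : ∀ v w, v ≠ u → w ≠ u → G.Adj v w → c v ≠ c w) :
    ∀ v, G.Adj u v →
      ((G.neighborFinset v).erase u).card - 1 ≤
        (((G.neighborFinset v).erase u).image c).card := by
  intro v hv
  by_contra! hlt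
  have hc : G.IsColoringOff u c := hc
  have hΔ : 0 < G.maxDegree := hu ▸ (G.degree_pos_iff_exists_adj u).mpr ⟨v, hv⟩
  have hN : #(G.neighborFinset u) = Fintype.card (Fin (G.maxDegree - 1)) + 1 := by
    rw [card_neighborFinset_eq_degree, hu, Fintype.card_fin]
    omega
  have hG : IsEmpty (G.Coloring (Fin (G.maxDegree - 1))) := not_nonempty_iff.mp fun h =>
    hcex.not_ge <| (Colorable.chromaticNumber_le h).trans <| by exact_mod_cast le_max_left ..
  have hNv : #((G.neighborFinset v).erase u) ≤ G.maxDegree - 1 := by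
    rw [card_erase_of_mem (by simpa using hv.symm), card_neighborFinset_eq_degree]
    have := G.degree_le_maxDegree v
    omega
  obtain ⟨β, hβv, hβ⟩ := exists_ne_notMem_of_card_add_one_lt (c v)
    (t := ((G.neighborFinset v).erase u).image c) (by
      have := card_image_le (s := (G.neighborFinset v).erase u) (f := c)
      rw [Fintype.card_fin]
      omega)
  have hclique := hc.isClique_insert_neighborFinset_erase hfree hG hN hv
    (fun x hxu hvx h => hβ (mem_image.mpr ⟨x, by simp [hxu, hvx], h⟩)) hβv
  have hω : G.maxDegree ≤ G.cliqueNum := by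
    have := hclique.card_le_cliqueNum
    rwa [card_insert_of_notMem (by simp), card_erase_of_mem (by simpa using hv),
      card_neighborFinset_eq_degree, hu, Nat.sub_add_cancel hΔ] at this
  have hχ : G.Colorable G.maxDegree := Nat.sub_add_cancel hΔ ▸ hc.colorable_succ
  exact hcex.not_ge <| hχ.chromaticNumber_le.trans <| by exact_mod_cast le_max_of_le_right hω

/-- In a minimum counterexample `G` to "every odd-hole-free graph `H` with
`Δ(H) ≥ 7` satisfies `χ(H) ≤ max (Δ(H) - 1) (ω(H))`", with `u` a vertex of maximum degree and
`c` a proper `(Δ(G) - 1)`-coloring of `G - u`: for every neighbour `v` of `u`, at most one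
pair of vertices of `N_{G-u}(v)` share a color, i.e. the number of colors used on
`N_{G-u}(v)` is at least `|N_{G-u}(v)| - 1`. -/
theorem statement_10 {V : Type} [Fintype V] [DecidableEq V]
    (G : SimpleGraph V) [DecidableRel G.Adj]
    (hfree : ¬ G.HasOddHole) (hΔ : 7 ≤ G.maxDegree)
    (hcex : (max (G.maxDegree - 1) G.cliqueNum : ℕ) < G.chromaticNumber)
    (hmin : ∀ (W : Type) [Fintype W] (H : SimpleGraph W) [DecidableRel H.Adj],
      Fintype.card W < Fintype.card V → ¬ H.HasOddHole → 7 ≤ H.maxDegree →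
      H.chromaticNumber ≤ (max (H.maxDegree - 1) H.cliqueNum : ℕ))
    (u : V) (hu : G.degree u = G.maxDegree)
    (c : V → Fin (G.maxDegree - 1))
    (hc : ∀ v w, v ≠ u → w ≠ u → G.Adj v w → c v ≠ c w) :
    ∀ v, G.Adj u v →
      ((G.neighborFinset v).erase u).card - 1 ≤
        (((G.neighborFinset v).erase u).image c).card :=
  statement_10_general G hfree hcex u hu c hc
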